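/- The rationalization ℚ ⊗_ℤ R of the ring R is isomorphic, as a ℚ-algebra, to the polynomial ring ℚ[x, y, z] in three variables, via the map sending x ↦ 1 ⊗ u_ξ, y ↦ 1 ⊗ u_{ξ^p}, z ↦ 1 ⊗ u_{ξ^q}. (Equivalently: all Euler classes a_ξ, a_{ξ^p}, a_{ξ^q} are torsion, and rationally the positive-degree cohomology ring of Theorem 3.8 is a polynomial ring on the orientation classes.) -/

import Mathlib

open MvPolynomial

/-- Variables: `X 0 = a_ξ`, `X 1 = a_{ξ^p}`, `X 2 = a_{ξ^q}`,
`X 3 = u_ξ`, `X 4 = u_{ξ^p}`, `X 5 = u_{ξ^q}`. -/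
noncomputable def relIdeal (p q : ℕ) : Ideal (MvPolynomial (Fin 6) ℤ) :=
  Ideal.span
    { C ((p : ℤ) * q) * X 0,
      C (q : ℤ) * X 1,
      C (p : ℤ) * X 2,
      X 3 * X 1 - C (p : ℤ) * (X 4 * X 0),
      X 3 * X 2 - C (q : ℤ) * (X 5 * X 0) }

/-- The ring `R` of the paper: positive-degree part of `H^⋆_{C_{pq}}(S^0; ℤ)`. -/
abbrev RR (p q : ℕ) : Type := MvPolynomial (Fin 6) ℤ ⧸ relIdeal p q

/-- The quotient map. -/
noncomputable def mk (p q : ℕ) : MvPolynomial (Fin 6) ℤ →+* RR p q :=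
  Ideal.Quotient.mk (relIdeal p q)

open TensorProduct

section Aux

variable (p q : ℕ)

/-- The "rational evaluation" sending the Euler classes to 0 and orientation
classes to the three polynomial variables. -/
noncomputable def phi : MvPolynomial (Fin 6) ℤ →ₐ[ℤ] MvPolynomial (Fin 3) ℚ :=
  aeval ![0, 0, 0, X 0, X 1, X 2]

lemma relIdeal_le_ker : relIdeal p q ≤ RingHom.ker (phi).toRingHom := by
  rw [relIdeal, Ideal.span_le]
  rintro x hx
  simp only [Set.mem_insert_iff, Set.mem_singleton_iff] at hx
  rcases hx with rfl | rfl | rfl | rfl | rfl <;>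
    simp [phi, RingHom.mem_ker]

/-- `R → ℚ[x,y,z]` induced by `phi`. -/
noncomputable def psi : RR p q →ₐ[ℤ] MvPolynomial (Fin 3) ℚ :=
  Ideal.Quotient.liftₐ (relIdeal p q) (phi) (fun a ha => relIdeal_le_ker p q ha)

/-- The inverse map `ℚ ⊗ R → ℚ[x,y,z]`. -/
noncomputable def ginv : ℚ ⊗[ℤ] RR p q →ₐ[ℤ] MvPolynomial (Fin 3) ℚ :=
  Algebra.TensorProduct.lift (IsScalarTower.toAlgHom ℤ ℚ (MvPolynomial (Fin 3) ℚ))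
    (psi p q) (fun _ _ => Commute.all _ _)

lemma ginv_tmul (a : ℚ) (P : MvPolynomial (Fin 6) ℤ) :
    ginv p q (a ⊗ₜ[ℤ] _root_.mk p q P) = algebraMap ℚ _ a * phi P := by
  simp [ginv, _root_.mk, Algebra.TensorProduct.lift_tmul, psi, Ideal.Quotient.liftₐ_apply,
    Ideal.Quotient.lift_mk]
  exact Or.inl rfl

lemma tmul_eq_zero_of_smul {n : ℕ} (hn : n ≠ 0) (m : RR p q)
    (h : (n : ℤ) • m = 0) : (1 : ℚ) ⊗ₜ[ℤ] m = 0 := by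
  have h1 : (1 : ℚ) = (n : ℤ) • ((n : ℚ)⁻¹) := by
    have : (n : ℚ) ≠ 0 := Nat.cast_ne_zero.mpr hn
    push_cast
    field_simp
    simp [zsmul_eq_mul, this]
  calc (1 : ℚ) ⊗ₜ[ℤ] m = ((n : ℤ) • ((n : ℚ)⁻¹)) ⊗ₜ[ℤ] m := by rw [← h1]
    _ = ((n : ℚ)⁻¹) ⊗ₜ[ℤ] ((n : ℤ) • m) := smul_tmul _ _ _
    _ = 0 := by rw [h, tmul_zero]

lemma smul_mk_zero (i : Fin 6) (n : ℤ) (h : C n * X i ∈ relIdeal p q) :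
    n • _root_.mk p q (X i) = 0 := by
  have h2 : n • _root_.mk p q (X i) = _root_.mk p q (C n * X i) := by
    rw [zsmul_eq_mul, map_mul]
    congr 1
    try simp [_root_.mk]
  rw [h2, _root_.mk, Ideal.Quotient.eq_zero_iff_mem]
  exact h

lemma mk_X0 (hp : p ≠ 0) (hq : q ≠ 0) :
    (1 : ℚ) ⊗ₜ[ℤ] _root_.mk p q (X 0) = (0 : ℚ ⊗[ℤ] RR p q) := by
  refine tmul_eq_zero_of_smul p q (n := p * q) (Nat.mul_ne_zero hp hq) _
    (smul_mk_zero p q 0 _ ?_)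
  have : ((p * q : ℕ) : ℤ) = (p : ℤ) * q := by push_cast; ring
  rw [this]
  exact Ideal.subset_span (by simp)

lemma mk_X1 (hq : q ≠ 0) :
    (1 : ℚ) ⊗ₜ[ℤ] _root_.mk p q (X 1) = (0 : ℚ ⊗[ℤ] RR p q) := by
  refine tmul_eq_zero_of_smul p q (n := q) hq _ (smul_mk_zero p q 1 _ ?_)
  exact Ideal.subset_span (by simp)

lemma mk_X2 (hp : p ≠ 0) :
    (1 : ℚ) ⊗ₜ[ℤ] _root_.mk p q (X 2) = (0 : ℚ ⊗[ℤ] RR p q) := by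
  refine tmul_eq_zero_of_smul p q (n := p) hp _ (smul_mk_zero p q 2 _ ?_)
  exact Ideal.subset_span (by simp)

end Aux

set_option maxHeartbeats 1000000 in
open TensorProduct in
/-- The rationalization `ℚ ⊗_ℤ R` is a polynomial ring `ℚ[x,y,z]` on the
orientation classes: the ℚ-algebra map `ℚ[x,y,z] → ℚ ⊗_ℤ R` sending
`x ↦ 1 ⊗ u_ξ`, `y ↦ 1 ⊗ u_{ξ^p}`, `z ↦ 1 ⊗ u_{ξ^q}` is bijective. -/
theorem rationalization_polynomial (p q : ℕ) (hp : p.Prime) (hq : q.Prime)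
    (hop : Odd p) (hoq : Odd q) (hpq : p ≠ q) :
    Function.Bijective
      (MvPolynomial.aeval (R := ℚ)
        ![(1 : ℚ) ⊗ₜ[ℤ] mk p q (X 3),
          (1 : ℚ) ⊗ₜ[ℤ] mk p q (X 4),
          (1 : ℚ) ⊗ₜ[ℤ] mk p q (X 5)] :
        MvPolynomial (Fin 3) ℚ →ₐ[ℚ] ℚ ⊗[ℤ] RR p q) := by
  set f : MvPolynomial (Fin 3) ℚ →ₐ[ℚ] ℚ ⊗[ℤ] RR p q :=
    (MvPolynomial.aeval (R := ℚ)
        ![(1 : ℚ) ⊗ₜ[ℤ] _root_.mk p q (X 3),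
          (1 : ℚ) ⊗ₜ[ℤ] _root_.mk p q (X 4),
          (1 : ℚ) ⊗ₜ[ℤ] _root_.mk p q (X 5)]) with hf
  constructor
  · -- injective: `ginv ∘ f = id`
    have hcomp : ∀ x, ginv p q (f x) = x := by
      have hG : ((ginv p q).toRingHom.comp f.toRingHom) =
          RingHom.id (MvPolynomial (Fin 3) ℚ) := by
        apply MvPolynomial.ringHom_ext
        · intro r
          exact RingHom.congr_fun
            (Subsingleton.elim
              (((ginv p q).toRingHom.comp f.toRingHom).comp (C : ℚ →+* _))
              ((RingHom.id _).comp (C : ℚ →+* _))) r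
        · intro i
          fin_cases i <;>
            (simp [hf, ginv_tmul, phi, Matrix.cons_val_succ]; try rfl)
      intro x
      exact RingHom.congr_fun hG x
    exact Function.LeftInverse.injective hcomp
  · -- surjective
    have hX : ∀ i : Fin 6, (1 : ℚ) ⊗ₜ[ℤ] _root_.mk p q (X i) ∈ f.range := by
      intro i
      fin_cases i
      · show (1 : ℚ) ⊗ₜ[ℤ] _root_.mk p q (X 0) ∈ f.range
        rw [mk_X0 p q hp.ne_zero hq.ne_zero]
        exact zero_mem _
      · show (1 : ℚ) ⊗ₜ[ℤ] _root_.mk p q (X 1) ∈ f.range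
        rw [mk_X1 p q hq.ne_zero]
        exact zero_mem _
      · show (1 : ℚ) ⊗ₜ[ℤ] _root_.mk p q (X 2) ∈ f.range
        rw [mk_X2 p q hp.ne_zero]
        exact zero_mem _
      · exact ⟨X 0, by simp [hf]⟩
      · exact ⟨X 1, by simp [hf]⟩
      · exact ⟨X 2, by simp [hf]⟩
    have key : ∀ P : MvPolynomial (Fin 6) ℤ,
        (1 : ℚ) ⊗ₜ[ℤ] _root_.mk p q P ∈ f.range := by
      intro P
      induction P using MvPolynomial.induction_on with
      | C n =>
        have h1 : _root_.mk p q (C n) = ((n : ℤ) : RR p q) := by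
          simp [_root_.mk]
        have h2 : (1 : ℚ) ⊗ₜ[ℤ] ((n : ℤ) : RR p q) = ((n : ℤ) : ℚ ⊗[ℤ] RR p q) :=
          map_intCast
            (Algebra.TensorProduct.includeRight : RR p q →ₐ[ℤ] ℚ ⊗[ℤ] RR p q) n
        rw [h1, h2]
        exact ⟨(n : MvPolynomial (Fin 3) ℚ), map_intCast f n⟩
      | add P Q hP hQ =>
        rw [map_add, tmul_add]
        exact add_mem hP hQ
      | mul_X P i hP =>
        have h1 : (1 : ℚ) ⊗ₜ[ℤ] _root_.mk p q (P * X i) =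
            ((1 : ℚ) ⊗ₜ[ℤ] _root_.mk p q P) * ((1 : ℚ) ⊗ₜ[ℤ] _root_.mk p q (X i)) := by
          rw [map_mul, Algebra.TensorProduct.tmul_mul_tmul, one_mul]
        rw [h1]
        exact mul_mem hP (hX i)
    intro y
    induction y using TensorProduct.induction_on with
    | zero => exact ⟨0, map_zero _⟩
    | tmul a b =>
      obtain ⟨P, rfl⟩ := Ideal.Quotient.mk_surjective (I := relIdeal p q) b
      have h1 : a ⊗ₜ[ℤ] (Ideal.Quotient.mk (relIdeal p q) P) =
          a • ((1 : ℚ) ⊗ₜ[ℤ] _root_.mk p q P) := by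
        rw [smul_tmul', smul_eq_mul, mul_one]; rfl
      obtain ⟨x, hx⟩ := key P
      refine ⟨a • x, ?_⟩
      rw [map_smul, show f x = (1 : ℚ) ⊗ₜ[ℤ] _root_.mk p q P from hx, ← h1]
    | add x y hx hy =>
      obtain ⟨u, hu⟩ := hx
      obtain ⟨v, hv⟩ := hy
      exact ⟨u + v, by rw [map_add, hu, hv]⟩
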